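/- In ℚ[S_L], any symmetric polynomial evaluated at the Jucys–Murphy elements J_2,...,J_L lies in the center Z(ℚ[S_L]). -/

import Mathlib

/-- The Jucys–Murphy element `J_k = ∑_{i<k} (i k)` in `ℚ[S_L]`. -/
noncomputable def jucysMurphy (L : ℕ) (k : Fin L) :
    MonoidAlgebra ℚ (Equiv.Perm (Fin L)) :=
  ∑ i ∈ Finset.univ.filter (· < k),
    MonoidAlgebra.of ℚ (Equiv.Perm (Fin L)) (Equiv.swap i k)

/-- Evaluation of a multivariate polynomial at a family of (commuting) elements of a
(possibly noncommutative) `ℚ`-algebra: each monomial `∏ xᵢ^{mᵢ}` is evaluated as the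
product in the order of the indices. -/
noncomputable def evalNC {n : ℕ} {A : Type*} [Ring A] [Algebra ℚ A]
    (p : MvPolynomial (Fin n) ℚ) (v : Fin n → A) : A :=
  (AddMonoidAlgebra.coeff p).sum fun m a => a • (List.ofFn fun i => v i ^ m i).prod

/-
The adjacent transpositions `s_k = (k, k+1)` generate `S_L`, so it suffices that each `s_k`
commutes with `p(J_2, …, J_L)`. Now `s_k` commutes with `J_i` for `i ≠ k, k+1`, and the relations
`s_k² = 1`, `J_{k+1} s_k = s_k J_k + 1` show that it also commutes with `J_k + J_{k+1}` and with
`J_k J_{k+1}`. The `J_i` commute pairwise, so `p(J)` is computed in the commutative subalgebra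
they generate; there `p` is a polynomial in the elementary symmetric functions, and each of those
is a polynomial in `J_k + J_{k+1}`, `J_k J_{k+1}` and the remaining `J_i`. For `k = 1` one uses
`J_1 = 0` instead, which makes `s_1 = J_2` commute with every `J_i`.
-/

namespace Multiset

variable {R : Type*} [CommSemiring R]

theorem esymm_zero_right (s : Multiset R) : s.esymm 0 = 1 := by
  simp [esymm]

theorem esymm_cons_succ (a : R) (s : Multiset R) (m : ℕ) :
    (a ::ₘ s).esymm (m + 1) = s.esymm (m + 1) + a * s.esymm m := by
  simp [esymm, map_map, sum_map_mul_left]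

theorem esymm_mem {M : Type*} [SetLike M R] [SubsemiringClass M R] {Z : M} {s : Multiset R}
    (hs : ∀ x ∈ s, x ∈ Z) (m : ℕ) : s.esymm m ∈ Z :=
  multiset_sum_mem _ fun _ hy => by
    obtain ⟨t, ht, rfl⟩ := mem_map.1 hy
    exact multiset_prod_mem _ fun x hx => hs x (mem_of_le (mem_powersetCard.1 ht).1 hx)

theorem esymm_cons_cons_mem {M : Type*} [SetLike M R] [SubsemiringClass M R] {Z : M}
    {a b : R} (hsum : a + b ∈ Z) (hprod : a * b ∈ Z) {s : Multiset R} (hs : ∀ x ∈ s, x ∈ Z) :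
    ∀ m, (a ::ₘ b ::ₘ s).esymm m ∈ Z
  | 0 => by rw [esymm_zero_right]; exact one_mem Z
  | 1 => by
    rw [esymm_cons_succ, esymm_cons_succ, esymm_zero_right, esymm_zero_right, add_assoc,
      mul_one, mul_one, add_comm b]
    exact add_mem (esymm_mem hs 1) hsum
  | m + 2 => by
    have h : (a ::ₘ b ::ₘ s).esymm (m + 2)
        = s.esymm (m + 2) + (a + b) * s.esymm (m + 1) + a * b * s.esymm m := by
      rw [esymm_cons_succ, esymm_cons_succ, esymm_cons_succ]; ring
    rw [h]
    exact add_mem (add_mem (esymm_mem hs _) (mul_mem hsum (esymm_mem hs _)))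
      (mul_mem hprod (esymm_mem hs _))

end Multiset

namespace MvPolynomial

theorem IsSymmetric.aeval_mem_of_add_mem_of_mul_mem {σ R A : Type*} [Fintype σ] [DecidableEq σ]
    [CommRing R] [CommRing A] [Algebra R A] {p : MvPolynomial σ R} (hp : p.IsSymmetric)
    {Z : Subalgebra R A} {v : σ → A} {a b : σ} (hab : a ≠ b) (hsum : v a + v b ∈ Z)
    (hprod : v a * v b ∈ Z) (hrest : ∀ i, i ≠ a → i ≠ b → v i ∈ Z) : aeval v p ∈ Z := by
  obtain ⟨q, hq⟩ := esymmAlgHom_surjective R le_rfl ⟨p, hp⟩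
  have hpq : aeval (fun i : Fin (Fintype.card σ) => esymm σ R (i + 1)) q = p :=
    (esymmAlgHom_apply q).symm.trans (congrArg Subtype.val hq)
  have huniv : (Finset.univ : Finset σ).val
      = a ::ₘ b ::ₘ (Finset.univ.val.erase a).erase b := by
    rw [Multiset.cons_erase (Multiset.mem_erase_of_ne hab.symm |>.2 (Finset.mem_univ _)),
      Multiset.cons_erase (Finset.mem_univ _)]
  have hesymm (m : ℕ) : aeval v (esymm σ R m) ∈ Z := by
    rw [aeval_esymm_eq_multiset_esymm, huniv, Multiset.map_cons, Multiset.map_cons]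
    refine Multiset.esymm_cons_cons_mem hsum hprod (fun x hx => ?_) m
    obtain ⟨i, hi, rfl⟩ := Multiset.mem_map.1 hx
    rw [(Finset.univ.nodup.erase a).mem_erase_iff, Finset.univ.nodup.mem_erase_iff] at hi
    exact hrest i hi.2.1 hi.1
  rw [← hpq, ← AlgHom.comp_apply, comp_aeval]
  have hle : Algebra.adjoin R
      (Set.range fun i : Fin (Fintype.card σ) => aeval v (esymm σ R (i + 1))) ≤ Z :=
    Algebra.adjoin_le (by rintro _ ⟨i, rfl⟩; exact hesymm _)
  rw [Algebra.adjoin_range_eq_range_aeval] at hle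
  exact hle (AlgHom.mem_range_self _ q)

end MvPolynomial

open Equiv MvPolynomial

theorem evalNC_algHom {n : ℕ} {A B : Type*} [Ring A] [Algebra ℚ A] [CommRing B] [Algebra ℚ B]
    (f : B →ₐ[ℚ] A) (w : Fin n → B) (p : MvPolynomial (Fin n) ℚ) :
    evalNC p (fun i => f (w i)) = f (aeval w p) := by
  rw [evalNC, aeval_def, eval₂_eq', map_sum, Finsupp.sum]
  refine Finset.sum_congr rfl fun m _ => ?_
  rw [map_mul, AlgHom.commutes, ← Algebra.smul_def, ← List.prod_ofFn, map_list_prod,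
    List.map_ofFn]
  simp only [Function.comp_def, map_pow]
  rfl

theorem commute_evalNC_of_forall {n : ℕ} {A : Type*} [Ring A] [Algebra ℚ A] {s : A}
    {v : Fin n → A} (h : ∀ i, Commute s (v i)) (p : MvPolynomial (Fin n) ℚ) :
    Commute s (evalNC p v) :=
  Commute.sum_right _ _ _ fun m _ => .smul_right
    (.list_prod_right _ _ fun x hx => by
      obtain ⟨i, rfl⟩ := List.mem_ofFn.1 hx
      exact (h i).pow_right _) _

open scoped IsMulCommutative in
theorem MvPolynomial.IsSymmetric.commute_evalNC_of_commute_add_of_commute_mul {n : ℕ}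
    {A : Type*} [Ring A] [Algebra ℚ A] {p : MvPolynomial (Fin n) ℚ} (hp : p.IsSymmetric)
    {v : Fin n → A} (hv : ∀ i j, Commute (v i) (v j)) {s : A} {a b : Fin n} (hab : a ≠ b)
    (hsum : Commute s (v a + v b)) (hprod : Commute s (v a * v b))
    (hrest : ∀ i, i ≠ a → i ≠ b → Commute s (v i)) : Commute s (evalNC p v) := by
  let C := Algebra.adjoin ℚ (Set.range v)
  have : IsMulCommutative C := Algebra.isMulCommutative_adjoin ℚ (by
    rintro _ ⟨i, rfl⟩ _ ⟨j, rfl⟩; exact hv i j)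
  let w (i : Fin n) : C := ⟨v i, Algebra.subset_adjoin ⟨i, rfl⟩⟩
  let Z : Subalgebra ℚ C := (Subalgebra.centralizer ℚ {s}).comap C.val
  have hZ (x : C) : x ∈ Z ↔ Commute s (C.val x) := by
    simp [Z, Subalgebra.mem_centralizer_iff, Commute, SemiconjBy]
  change Commute s (evalNC p fun i => C.val (w i))
  rw [evalNC_algHom, ← hZ]
  exact hp.aeval_mem_of_add_mem_of_mul_mem hab ((hZ _).2 hsum) ((hZ _).2 hprod)
    fun i hia hib => (hZ _).2 (hrest i hia hib)

theorem Equiv.swap_apply_mem_iff {α : Type*} [DecidableEq α] {S : Set α} {i j : α}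
    (h : i ∈ S ↔ j ∈ S) (x : α) : swap i j x ∈ S ↔ x ∈ S := by
  rcases eq_or_ne x i with rfl | hi
  · rwa [swap_apply_left, Iff.comm]
  rcases eq_or_ne x j with rfl | hj
  · rwa [swap_apply_right]
  rw [swap_apply_of_ne_of_ne hi hj]

section Involution

variable {R : Type*} [Ring R] {s x y : R}

theorem mul_eq_mul_add_one_swap (hs : s * s = 1) (h : y * s = s * x + 1) :
    s * y = x * s + 1 := by
  calc s * y = s * (y * s) * s := by rw [mul_assoc, mul_assoc, hs, mul_one]
    _ = (s * s) * x * s + s * s := by rw [h]; noncomm_ring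
    _ = x * s + 1 := by rw [hs, one_mul]

theorem commute_add_of_mul_eq_mul_add_one (hs : s * s = 1) (h : y * s = s * x + 1) :
    Commute s (x + y) := by
  have hsx : s * x = y * s - 1 := by rw [h]; abel
  change s * (x + y) = (x + y) * s
  rw [mul_add, hsx, mul_eq_mul_add_one_swap hs h]
  noncomm_ring

theorem commute_mul_of_mul_eq_mul_add_one (hs : s * s = 1) (h : y * s = s * x + 1)
    (hxy : Commute x y) : Commute s (x * y) := by
  have hsx : s * x = y * s - 1 := by rw [h]; abel
  calc s * (x * y) = y * (s * y) - y := by rw [← mul_assoc, hsx]; noncomm_ring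
    _ = y * x * s := by rw [mul_eq_mul_add_one_swap hs h]; noncomm_ring
    _ = x * y * s := by rw [hxy.eq]

end Involution

section JucysMurphy

variable {L : ℕ}

local notation "of" => MonoidAlgebra.of ℚ (Perm (Fin L))

theorem commute_jucysMurphy_of_apply_lt_iff {k : Fin L} {σ : Perm (Fin L)} (hk : σ k = k)
    (h : ∀ j, σ j < k ↔ j < k) : Commute (of σ) (jucysMurphy L k) := by
  have hconj (i : Fin L) : of σ * of (swap i k) = of (swap (σ i) k) * of σ := by
    rw [← map_mul, ← map_mul, ← hk, swap_apply_apply, hk, inv_mul_cancel_right]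
  change of σ * _ = _ * of σ
  rw [jucysMurphy, Finset.mul_sum, Finset.sum_mul, Finset.sum_congr rfl fun i _ => hconj i]
  exact Finset.sum_equiv σ (by simp [h]) fun _ _ => rfl

theorem jucysMurphy_commute (c d : Fin L) : Commute (jucysMurphy L c) (jucysMurphy L d) := by
  wlog hcd : c < d generalizing c d
  · rcases (not_lt.1 hcd).eq_or_lt with rfl | hdc
    · exact .refl _
    · exact (this d c hdc).symm
  refine Commute.sum_left _ _ _ fun i hi =>
    commute_jucysMurphy_of_apply_lt_iff ?_ (swap_apply_mem_iff (S := Set.Iio _) ?_)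
  · simp only [Finset.mem_filter] at hi
    exact swap_apply_of_ne_of_ne (hi.2.trans hcd).ne' hcd.ne'
  · simp only [Finset.mem_filter] at hi
    exact iff_of_true (hi.2.trans hcd) hcd

theorem commute_swap_jucysMurphy {c d k : Fin L} (hcd : (d : ℕ) = c + 1) (hkc : k ≠ c)
    (hkd : k ≠ d) : Commute (of (swap c d)) (jucysMurphy L k) := by
  refine commute_jucysMurphy_of_apply_lt_iff (swap_apply_of_ne_of_ne hkc hkd)
    (swap_apply_mem_iff (S := Set.Iio _) ?_)
  rw [Set.mem_Iio, Set.mem_Iio, Fin.lt_def, Fin.lt_def]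
  have := Fin.val_ne_of_ne hkc
  have := Fin.val_ne_of_ne hkd
  omega

theorem jucysMurphy_mul_swap {c d : Fin L} (hcd : (d : ℕ) = c + 1) :
    jucysMurphy L d * of (swap c d) = of (swap c d) * jucysMurphy L c + 1 := by
  have hlt : Finset.univ.filter (· < d) = insert c (Finset.univ.filter (· < c)) := by
    ext j
    simp only [Finset.mem_filter, Finset.mem_univ, true_and, Finset.mem_insert, Fin.lt_def,
      Fin.ext_iff]
    omega
  have hterm (i : Fin L) (hi : i < c) :
      of (swap i d) * of (swap c d) = of (swap c d) * of (swap i c) := by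
    have hid : i ≠ d := (hi.trans (Fin.lt_def.2 (by omega))).ne
    have hconj := swap_apply_apply (swap c d) i c
    rw [swap_apply_of_ne_of_ne hi.ne hid, swap_apply_left, swap_inv] at hconj
    rw [← map_mul, ← map_mul, hconj, mul_assoc, swap_mul_self, mul_one]
  rw [jucysMurphy, jucysMurphy, hlt, Finset.sum_insert (by simp), add_mul, ← map_mul,
    swap_mul_self, map_one, Finset.sum_mul, Finset.mul_sum, add_comm]
  congr 1
  exact Finset.sum_congr rfl fun i hi => hterm i (Finset.mem_filter.1 hi).2

theorem jucysMurphy_zero : jucysMurphy (L + 1) 0 = 0 := by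
  simp [jucysMurphy]

end JucysMurphy

theorem MonoidAlgebra.commute_of_closure_eq_top {k G : Type*} [CommSemiring k] [Monoid G]
    {T : Set G} (hT : Submonoid.closure T = ⊤) {z : MonoidAlgebra k G}
    (h : ∀ g ∈ T, Commute (of k G g) z) (x : MonoidAlgebra k G) : Commute x z := by
  have hG (g : G) : Commute (of k G g) z := by
    induction (hT ▸ Submonoid.mem_top g : g ∈ Submonoid.closure T)
      using Submonoid.closure_induction with
    | mem g hg => exact h g hg
    | one => simp
    | mul g g' _ _ hg hg' => simpa using hg.mul_left hg'
  induction x using MonoidAlgebra.induction_on with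
  | of g => exact hG g
  | add x y hx hy => exact hx.add_left hy
  | smul r x hx => exact hx.smul_left r

theorem MvPolynomial.IsSymmetric.commute_swap_evalNC_jucysMurphy {n : ℕ}
    {p : MvPolynomial (Fin n) ℚ} (hp : p.IsSymmetric) (k : Fin n) :
    Commute (MonoidAlgebra.of ℚ _ (swap k.castSucc k.succ))
      (evalNC p fun i => jucysMurphy (n + 1) i.succ) := by
  set s := MonoidAlgebra.of ℚ (Perm (Fin (n + 1))) (swap k.castSucc k.succ)
  have hs : s * s = 1 := by rw [← map_mul, swap_mul_self, map_one]
  have hrel : jucysMurphy (n + 1) k.succ * s = s * jucysMurphy (n + 1) k.castSucc + 1 :=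
    jucysMurphy_mul_swap (by simp)
  have hrest (i : Fin n) (hi : i.succ ≠ k.castSucc) (hik : i ≠ k) :
      Commute s (jucysMurphy (n + 1) i.succ) :=
    commute_swap_jucysMurphy (by simp) hi (Fin.succ_injective _ |>.ne hik)
  rcases Fin.eq_zero_or_eq_succ k.castSucc with hk | ⟨a, ha⟩
  · refine commute_evalNC_of_forall (fun i => ?_) p
    rcases eq_or_ne i k with rfl | hik
    · simpa [hk, jucysMurphy_zero] using commute_add_of_mul_eq_mul_add_one hs hrel
    · exact hrest i (hk ▸ Fin.succ_ne_zero i) hik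
  · rw [ha] at hrel
    refine hp.commute_evalNC_of_commute_add_of_commute_mul (a := a) (b := k)
      (fun _ _ => jucysMurphy_commute _ _) ?_
      (commute_add_of_mul_eq_mul_add_one hs hrel)
      (commute_mul_of_mul_eq_mul_add_one hs hrel (jucysMurphy_commute _ _))
      fun i hia hik => hrest i (ha ▸ (Fin.succ_injective _).ne hia) hik
    rintro rfl
    exact Fin.castSucc_lt_succ.ne ha

/-- Any symmetric polynomial evaluated at the Jucys–Murphy elements `J_2, …, J_L`
(here `L = n + 1`, so that there are `L - 1` variables) lies in the center of `ℚ[S_L]`: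
it commutes with every element of the group algebra. -/
theorem stmt9 (n : ℕ) (p : MvPolynomial (Fin n) ℚ) (hp : p.IsSymmetric)
    (x : MonoidAlgebra ℚ (Equiv.Perm (Fin (n + 1)))) :
    evalNC p (fun i => jucysMurphy (n + 1) i.succ) * x =
      x * evalNC p (fun i => jucysMurphy (n + 1) i.succ) :=
  (MonoidAlgebra.commute_of_closure_eq_top (Perm.mclosure_swap_castSucc_succ n)
    (by rintro _ ⟨k, rfl⟩; exact hp.commute_swap_evalNC_jucysMurphy k) x).symm.eq
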